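/- arXiv:2008.11765 — 3 statements merged into one kernel-verified Lean document; each statement's English description precedes it below -/
import Mathlib

section
/- Let k > 0 and μ ∈ (0,1), and let F_X denote the cumulative distribution function of the PGN(μ,k) distribution. Then for every x < 0, F_X(x) = ∫_{1/2}^{1} f_U(u) du − (1/Γ(k/2)) ∫_{1/2}^{1} γ(k/2, x²/(2cos²(πu))) f_U(u) du, and for every x ≥ 0, F_X(x) = ∫_{1/2}^{1} f_U(u) du + (1/Γ(k/2)) ∫_{0}^{1/2} γ(k/2, x²/(2cos²(πu))) f_U(u) du, where γ(s,t) = ∫_0^t y^{s−1} e^{−y} dy is the lower incomplete gamma function. -/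
open MeasureTheory Real Set

/-- Density of the chi-squared distribution with `k` degrees of freedom. -/
noncomputable def chiSqDensity (k : ℝ) (v : ℝ) : ℝ :=
  if 0 < v then v ^ (k / 2 - 1) * Real.exp (-v / 2) / ((2 : ℝ) ^ (k / 2) * Real.Gamma (k / 2))
  else 0

/-- The Beta function `B(a,b) = Γ(a)Γ(b)/Γ(a+b)`. -/
noncomputable def realBeta (a b : ℝ) : ℝ := Real.Gamma a * Real.Gamma b / Real.Gamma (a + b)

/-- Density of the Beta(2μ, 2(1-μ)) distribution. -/
noncomputable def betaDensity (μ : ℝ) (u : ℝ) : ℝ :=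
  if 0 < u ∧ u < 1 then
    u ^ (2 * μ - 1) * (1 - u) ^ (1 - 2 * μ) / realBeta (2 * μ) (2 * (1 - μ))
  else 0

/-- The chi-squared distribution with `k` degrees of freedom, as a measure on ℝ. -/
noncomputable def chiSqMeasure (k : ℝ) : Measure ℝ :=
  volume.withDensity (fun v => ENNReal.ofReal (chiSqDensity k v))

/-- The Beta(2μ, 2(1-μ)) distribution, as a measure on ℝ. -/
noncomputable def betaMeasure (μ : ℝ) : Measure ℝ :=
  volume.withDensity (fun u => ENNReal.ofReal (betaDensity μ u))

/-- The polar-generalized normal distribution PGN(μ, k): the pushforward of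
(chi-squared k) ⊗ (Beta(2μ, 2(1-μ))) under `(v, u) ↦ √v · cos (π u)`. -/
noncomputable def PGN (μ k : ℝ) : Measure ℝ :=
  Measure.map (fun p : ℝ × ℝ => Real.sqrt p.1 * Real.cos (π * p.2))
    ((chiSqMeasure k).prod (betaMeasure μ))

/-- Lower incomplete gamma function `γ(s, t) = ∫_0^t y^(s-1) e^(-y) dy`. -/
noncomputable def lowerIncGamma (s t : ℝ) : ℝ := ∫ y in (0:ℝ)..t, y ^ (s - 1) * Real.exp (-y)

/-! Conditioning on the angle `u`, the event `√V cos(πu) ≤ x` is a half-line event for the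
chi-squared radius `V`: for `cos(πu) > 0` it is `V ≤ x²/cos²(πu)` (empty if `x < 0`), for
`cos(πu) < 0` it is `V ≥ x²/cos²(πu)` (everything if `x ≥ 0`). Since χ²(k) is the Gamma
distribution of shape `k/2` and rate `1/2`, these probabilities are
`γ(k/2, x²/(2cos²(πu)))/Γ(k/2)` or its complement, and Tonelli integrates them against the
Beta density over `u < 1/2` and `u > 1/2`. -/

open ProbabilityTheory

lemma lowerIncGamma_nonneg (s : ℝ) {t : ℝ} (ht : 0 ≤ t) : 0 ≤ lowerIncGamma s t :=
  intervalIntegral.integral_nonneg ht fun y hy => by have := hy.1; positivity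

lemma lowerIncGamma_le_Gamma {s t : ℝ} (hs : 0 < s) (ht : 0 ≤ t) :
    lowerIncGamma s t ≤ Gamma s := by
  rw [Gamma_eq_integral hs, lowerIncGamma, intervalIntegral.integral_of_le ht]
  simp_rw [mul_comm (_ ^ (s - 1))]
  refine setIntegral_mono_set (GammaIntegral_convergent hs) ?_ (Ioc_subset_Ioi_self.eventuallyLE)
  filter_upwards [self_mem_ae_restrict measurableSet_Ioi] with y (hy : 0 < y)
  positivity

lemma continuous_lowerIncGamma {s : ℝ} (hs : 0 < s) : Continuous (lowerIncGamma s) :=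
  intervalIntegral.continuous_primitive (fun _ _ =>
    (intervalIntegral.intervalIntegrable_rpow' (by linarith)).mul_continuousOn
      (by fun_prop)) 0

lemma integral_rpow_mul_exp_neg_mul {a r c : ℝ} (hr : 0 < r) (hc : 0 ≤ c) :
    ∫ x in (0:ℝ)..c, x ^ (a - 1) * exp (-(r * x)) = lowerIncGamma a (r * c) / r ^ a := by
  have hscale : EqOn (fun x : ℝ => x ^ (a - 1) * exp (-(r * x)))
      (fun x => r ^ (1 - a) * ((r * x) ^ (a - 1) * exp (-(r * x)))) (uIcc 0 c) := by
    intro x hx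
    rw [uIcc_of_le hc] at hx
    simp only
    rw [mul_rpow hr.le hx.1, ← mul_assoc, ← mul_assoc, ← rpow_add hr]
    simp
  rw [intervalIntegral.integral_congr hscale, intervalIntegral.integral_const_mul,
    intervalIntegral.integral_comp_mul_left (fun y => y ^ (a - 1) * exp (-y)) hr.ne', mul_zero,
    ← lowerIncGamma, smul_eq_mul, ← mul_assoc, ← rpow_neg_one, ← rpow_add hr,
    div_eq_inv_mul, ← rpow_neg hr.le]
  ring_nf

lemma cdf_gammaMeasure_of_nonneg {a r c : ℝ} (ha : 0 < a) (hr : 0 < r) (hc : 0 ≤ c) :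
    cdf (gammaMeasure a r) c
      = lowerIncGamma a (r * c) / Gamma a := by
  have hpdf : EqOn (gammaPDFReal a r)
      (fun x => r ^ a / Gamma a * (x ^ (a - 1) * exp (-(r * x)))) (uIcc 0 c) := by
    intro x hx
    rw [uIcc_of_le hc] at hx
    simp only [gammaPDFReal, if_pos hx.1, mul_assoc]
  rw [cdf_gammaMeasure_eq_integral ha hr,
    setIntegral_eq_of_subset_of_ae_sdiff_eq_zero measurableSet_Iic.nullMeasurableSet
      Icc_subset_Iic_self (ae_of_all _ fun x hx => ?_),
    integral_Icc_eq_integral_Ioc, ← intervalIntegral.integral_of_le hc,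
    intervalIntegral.integral_congr hpdf, intervalIntegral.integral_const_mul,
    integral_rpow_mul_exp_neg_mul hr hc]
  · field_simp [(rpow_pos_of_pos hr a).ne']
  · have hx0 : x < 0 := not_le.1 fun h => hx.2 ⟨h, hx.1⟩
    simp [gammaPDFReal, hx0.not_ge]

lemma chiSqMeasure_eq_gammaMeasure (k : ℝ) :
    chiSqMeasure k = gammaMeasure (k / 2) (1 / 2) := by
  refine withDensity_congr_ae ?_
  -- at `v = 0` the densities differ when `k = 2`, since `0 ^ 0 = 1`
  filter_upwards [Measure.ae_ne volume 0] with v hv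
  rw [gammaPDF_eq, chiSqDensity]
  rcases hv.lt_or_gt with h | h
  · rw [if_neg h.not_gt, if_neg h.not_ge]
  · rw [if_pos h, if_pos h.le, div_rpow zero_le_one zero_le_two, one_rpow]
    congr 1
    field_simp

instance (k : ℝ) : NullSingletonClass (chiSqMeasure k) := by
  unfold chiSqMeasure
  infer_instance

instance (k : ℝ) : SFinite (chiSqMeasure k) := by
  unfold chiSqMeasure
  infer_instance

lemma isProbabilityMeasure_chiSqMeasure {k : ℝ} (hk : 0 < k) :
    IsProbabilityMeasure (chiSqMeasure k) := by
  rw [chiSqMeasure_eq_gammaMeasure]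
  exact isProbabilityMeasure_gammaMeasure (by positivity) one_half_pos

lemma chiSqMeasure_Iic {k c : ℝ} (hk : 0 < k) (hc : 0 ≤ c) :
    (chiSqMeasure k (Iic c)).toReal = lowerIncGamma (k / 2) (c / 2) / Gamma (k / 2) := by
  have := isProbabilityMeasure_chiSqMeasure hk
  rw [← measureReal_def, ← cdf_eq_real, chiSqMeasure_eq_gammaMeasure,
    cdf_gammaMeasure_of_nonneg (by positivity) one_half_pos hc, one_div_mul_eq_div]

lemma chiSqMeasure_Ici {k c : ℝ} (hk : 0 < k) (hc : 0 ≤ c) :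
    (chiSqMeasure k (Ici c)).toReal = 1 - lowerIncGamma (k / 2) (c / 2) / Gamma (k / 2) := by
  have := isProbabilityMeasure_chiSqMeasure hk
  rw [← chiSqMeasure_Iic hk hc, ← compl_Iio, prob_compl_eq_one_sub measurableSet_Iio,
    measure_congr Iio_ae_eq_Iic, ENNReal.toReal_sub_of_le prob_le_one ENNReal.one_ne_top,
    ENNReal.toReal_one]

lemma betaDensity_eq_betaPDFReal (μ : ℝ) :
    betaDensity μ = betaPDFReal (2 * μ) (2 * (1 - μ)) := by
  ext u
  rw [betaDensity, betaPDFReal, realBeta, ← beta]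
  split_ifs
  · rw [show 2 * (1 - μ) - 1 = 1 - 2 * μ by ring]
    ring
  · rfl

lemma betaPDFReal_nonneg {α β : ℝ} (hα : 0 < α) (hβ : 0 < β) (x : ℝ) :
    0 ≤ betaPDFReal α β x := by
  by_cases hx : 0 < x ∧ x < 1
  · exact (betaPDFReal_pos hx.1 hx.2 hα hβ).le
  · simp [betaPDFReal, hx]

lemma integrable_betaPDFReal {α β : ℝ} (hα : 0 < α) (hβ : 0 < β) :
    Integrable (betaPDFReal α β) := by
  refine ⟨(measurable_betaPDFReal α β).aestronglyMeasurable, ?_⟩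
  rw [hasFiniteIntegral_iff_ofReal (ae_of_all _ (betaPDFReal_nonneg hα hβ))]
  exact (lintegral_betaPDF_eq_one hα hβ).trans_lt ENNReal.one_lt_top

lemma betaDensity_nonneg {μ : ℝ} (hμ : μ ∈ Ioo 0 1) (u : ℝ) : 0 ≤ betaDensity μ u := by
  rw [betaDensity_eq_betaPDFReal]
  exact betaPDFReal_nonneg (by linarith [hμ.1]) (by linarith [hμ.2]) u

lemma integrable_betaDensity {μ : ℝ} (hμ : μ ∈ Ioo 0 1) : Integrable (betaDensity μ) := by
  rw [betaDensity_eq_betaPDFReal]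
  exact integrable_betaPDFReal (by linarith [hμ.1]) (by linarith [hμ.2])

section SqrtMulLe

variable {c x : ℝ}

lemma setOf_sqrt_mul_le_of_pos_of_nonneg (hc : 0 < c) (hx : 0 ≤ x) :
    {v : ℝ | √v * c ≤ x} = Iic ((x / c) ^ 2) := by
  ext v
  simp only [mem_ofPred_eq, mem_Iic, ← le_div_iff₀ hc, sqrt_le_left (div_nonneg hx hc.le)]

lemma setOf_sqrt_mul_le_of_pos_of_neg (hc : 0 < c) (hx : x < 0) :
    {v : ℝ | √v * c ≤ x} = ∅ :=
  eq_empty_of_forall_notMem fun v (hv : √v * c ≤ x) =>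
    (mul_nonneg (sqrt_nonneg v) hc.le).not_gt (hv.trans_lt hx)

lemma setOf_sqrt_mul_le_of_neg_of_nonneg (hc : c < 0) (hx : 0 ≤ x) :
    {v : ℝ | √v * c ≤ x} = univ :=
  eq_univ_of_forall fun v => (mul_nonpos_of_nonneg_of_nonpos (sqrt_nonneg v) hc.le).trans hx

lemma setOf_sqrt_mul_le_of_neg_of_neg (hc : c < 0) (hx : x < 0) :
    {v : ℝ | √v * c ≤ x} = Ici ((x / c) ^ 2) := by
  ext v
  simp only [mem_ofPred_eq, mem_Ici, ← div_le_iff_of_neg hc,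
    le_sqrt' (div_pos_of_neg_of_neg hx hc)]

end SqrtMulLe

lemma MeasureTheory.Integrable.lowerIncGamma_comp_mul {α : Type*} [MeasurableSpace α]
    {ν : Measure α} {s : ℝ} (hs : 0 < s) {f g : α → ℝ} (hf : Integrable f ν)
    (hg : Measurable g) (hg0 : ∀ a, 0 ≤ g a) :
    Integrable (fun a => lowerIncGamma s (g a) * f a) ν :=
  hf.bdd_mul ((continuous_lowerIncGamma hs).measurable.comp hg).aestronglyMeasurable
    (ae_of_all _ fun a => by
      rw [norm_of_nonneg (lowerIncGamma_nonneg s (hg0 a))]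
      exact lowerIncGamma_le_Gamma hs (hg0 a))

lemma measurable_chiSqMeasure_sqrt_mul_cos_le (k x : ℝ) :
    Measurable fun u => chiSqMeasure k {v | √v * cos (π * u) ≤ x} := by
  have hmap : Measurable fun p : ℝ × ℝ => √p.1 * cos (π * p.2) := by fun_prop
  exact measurable_measure_prodMk_right (hmap (measurableSet_Iic (a := x)))

lemma chiSqMeasure_sqrt_mul_le_of_pos_of_nonneg {k c x : ℝ} (hk : 0 < k) (hc : 0 < c)
    (hx : 0 ≤ x) :
    (chiSqMeasure k {v | √v * c ≤ x}).toReal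
      = lowerIncGamma (k / 2) (x ^ 2 / (2 * c ^ 2)) / Gamma (k / 2) := by
  rw [setOf_sqrt_mul_le_of_pos_of_nonneg hc hx, chiSqMeasure_Iic hk (sq_nonneg _)]
  ring_nf

lemma chiSqMeasure_sqrt_mul_le_of_neg_of_neg {k c x : ℝ} (hk : 0 < k) (hc : c < 0)
    (hx : x < 0) :
    (chiSqMeasure k {v | √v * c ≤ x}).toReal
      = 1 - lowerIncGamma (k / 2) (x ^ 2 / (2 * c ^ 2)) / Gamma (k / 2) := by
  rw [setOf_sqrt_mul_le_of_neg_of_neg hc hx, chiSqMeasure_Ici hk (sq_nonneg _)]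
  ring_nf

lemma cos_pi_mul_pos {u : ℝ} (hu : u ∈ Ioo 0 (1 / 2)) : 0 < cos (π * u) :=
  cos_pos_of_mem_Ioo ⟨by nlinarith [pi_pos, hu.1], by nlinarith [pi_pos, hu.2]⟩

lemma cos_pi_mul_neg {u : ℝ} (hu : u ∈ Ioo (1 / 2) 1) : cos (π * u) < 0 :=
  cos_neg_of_pi_div_two_lt_of_lt (by nlinarith [pi_pos, hu.1]) (by nlinarith [pi_pos, hu.2])

lemma PGN_Iic_toReal {μ k : ℝ} (hk : 0 < k) (hμ : μ ∈ Ioo 0 1) (x : ℝ) :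
    (PGN μ k (Iic x)).toReal
      = ∫ u, betaDensity μ u * (chiSqMeasure k {v | √v * cos (π * u) ≤ x}).toReal := by
  have := isProbabilityMeasure_chiSqMeasure hk
  have hmap : Measurable fun p : ℝ × ℝ => √p.1 * cos (π * p.2) := by fun_prop
  have hβ : Measurable (betaDensity μ) := by
    rw [betaDensity_eq_betaPDFReal]
    exact measurable_betaPDFReal _ _
  rw [PGN, Measure.map_apply hmap measurableSet_Iic, _root_.betaMeasure,
    Measure.prod_apply_symm (hmap measurableSet_Iic),
    lintegral_withDensity_eq_lintegral_mul _ hβ.ennreal_ofReal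
      (measurable_measure_prodMk_right (hmap measurableSet_Iic)),
    ← integral_toReal]
  · congr 1 with u
    rw [Pi.mul_apply, ENNReal.toReal_mul, ENNReal.toReal_ofReal (betaDensity_nonneg hμ u)]
    rfl
  · exact (hβ.ennreal_ofReal.mul (measurable_chiSqMeasure_sqrt_mul_cos_le k x)).aemeasurable
  · exact ae_of_all _ fun u => ENNReal.mul_lt_top ENNReal.ofReal_lt_top (measure_lt_top _ _)

lemma PGN_Iic_toReal_eq_add {μ k : ℝ} (hk : 0 < k) (hμ : μ ∈ Ioo 0 1) (x : ℝ) :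
    (PGN μ k (Iic x)).toReal
      = (∫ u in (0 : ℝ)..(1 / 2),
          betaDensity μ u * (chiSqMeasure k {v | √v * cos (π * u) ≤ x}).toReal)
        + ∫ u in (1 / 2 : ℝ)..1,
          betaDensity μ u * (chiSqMeasure k {v | √v * cos (π * u) ≤ x}).toReal := by
  have := isProbabilityMeasure_chiSqMeasure hk
  have hF : Integrable fun u =>
      betaDensity μ u * (chiSqMeasure k {v | √v * cos (π * u) ≤ x}).toReal :=
    (integrable_betaDensity hμ).mul_bdd (c := 1)
      (measurable_chiSqMeasure_sqrt_mul_cos_le k x).ennreal_toReal.aestronglyMeasurable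
      (ae_of_all _ fun u => by simpa [measureReal_def] using measureReal_le_one)
  have hsupp : ∀ u ∉ Ioc (0 : ℝ) 1,
      betaDensity μ u * (chiSqMeasure k {v | √v * cos (π * u) ≤ x}).toReal = 0 :=
    fun u hu => by rw [betaDensity, if_neg fun h => hu ⟨h.1, h.2.le⟩, zero_mul]
  rw [intervalIntegral.integral_add_adjacent_intervals hF.intervalIntegrable
    hF.intervalIntegrable, intervalIntegral.integral_of_le zero_le_one,
    setIntegral_eq_integral_of_forall_compl_eq_zero hsupp, PGN_Iic_toReal hk hμ x]

lemma PGN_Iic_of_neg {μ k x : ℝ} (hk : 0 < k) (hμ : μ ∈ Ioo 0 1) (hx : x < 0) :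
    (PGN μ k (Iic x)).toReal
      = (∫ u in (1 / 2 : ℝ)..1, betaDensity μ u)
        - 1 / Gamma (k / 2) * ∫ u in (1 / 2 : ℝ)..1,
          lowerIncGamma (k / 2) (x ^ 2 / (2 * cos (π * u) ^ 2)) * betaDensity μ u := by
  have hγβ := (integrable_betaDensity hμ).lowerIncGamma_comp_mul (half_pos hk)
    (g := fun u => x ^ 2 / (2 * cos (π * u) ^ 2)) (by fun_prop) (fun u => by positivity)
  rw [PGN_Iic_toReal_eq_add hk hμ x,
    intervalIntegral.integral_congr_Ioo_of_le (a := 0) (b := 1 / 2) (g := fun _ => 0)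
      (by norm_num) fun u hu => by
        simp [setOf_sqrt_mul_le_of_pos_of_neg (cos_pi_mul_pos hu) hx],
    intervalIntegral.integral_congr_Ioo_of_le (a := 1 / 2) (b := 1)
      (g := fun u => betaDensity μ u - 1 / Gamma (k / 2)
      * (lowerIncGamma (k / 2) (x ^ 2 / (2 * cos (π * u) ^ 2)) * betaDensity μ u))
      (by norm_num) fun u hu => by
        simp only [chiSqMeasure_sqrt_mul_le_of_neg_of_neg hk (cos_pi_mul_neg hu) hx]
        ring,
    intervalIntegral.integral_sub (integrable_betaDensity hμ).intervalIntegrable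
      (hγβ.intervalIntegrable.const_mul _),
    intervalIntegral.integral_zero, intervalIntegral.integral_const_mul, zero_add]

lemma PGN_Iic_of_nonneg {μ k x : ℝ} (hk : 0 < k) (hμ : μ ∈ Ioo 0 1) (hx : 0 ≤ x) :
    (PGN μ k (Iic x)).toReal
      = (∫ u in (1 / 2 : ℝ)..1, betaDensity μ u)
        + 1 / Gamma (k / 2) * ∫ u in (0 : ℝ)..(1 / 2),
          lowerIncGamma (k / 2) (x ^ 2 / (2 * cos (π * u) ^ 2)) * betaDensity μ u := by
  have := isProbabilityMeasure_chiSqMeasure hk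
  rw [PGN_Iic_toReal_eq_add hk hμ x,
    intervalIntegral.integral_congr_Ioo_of_le (a := 0) (b := 1 / 2)
      (g := fun u => 1 / Gamma (k / 2)
      * (lowerIncGamma (k / 2) (x ^ 2 / (2 * cos (π * u) ^ 2)) * betaDensity μ u))
      (by norm_num) fun u hu => by
        simp only [chiSqMeasure_sqrt_mul_le_of_pos_of_nonneg hk (cos_pi_mul_pos hu) hx]
        ring,
    intervalIntegral.integral_congr_Ioo_of_le (a := 1 / 2) (b := 1) (g := betaDensity μ)
      (by norm_num) fun u hu => by
        simp [setOf_sqrt_mul_le_of_neg_of_nonneg (cos_pi_mul_neg hu) hx],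
    intervalIntegral.integral_const_mul, add_comm]

theorem stmt0 (k μ : ℝ) (hk : 0 < k) (hμ : μ ∈ Set.Ioo (0:ℝ) 1) :
    (∀ x : ℝ, x < 0 →
      (PGN μ k (Set.Iic x)).toReal =
        (∫ u in (1/2 : ℝ)..1, betaDensity μ u) -
          (1 / Real.Gamma (k / 2)) *
            ∫ u in (1/2 : ℝ)..1,
              lowerIncGamma (k / 2) (x ^ 2 / (2 * Real.cos (π * u) ^ 2)) * betaDensity μ u) ∧
    (∀ x : ℝ, 0 ≤ x →
      (PGN μ k (Set.Iic x)).toReal =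
        (∫ u in (1/2 : ℝ)..1, betaDensity μ u) +
          (1 / Real.Gamma (k / 2)) *
            ∫ u in (0 : ℝ)..(1/2),
              lowerIncGamma (k / 2) (x ^ 2 / (2 * Real.cos (π * u) ^ 2)) * betaDensity μ u) :=
  ⟨fun _ hx => PGN_Iic_of_neg hk hμ hx, fun _ hx => PGN_Iic_of_nonneg hk hμ hx⟩
end

section
/- The PGN(1/2, 2) distribution equals the standard normal distribution N(0,1) on ℝ. Equivalently, if V has the chi-squared distribution with 2 degrees of freedom, U is uniformly distributed on (0,1), and V and U are independent, then √V · cos(πU) has the standard normal distribution. -/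
open MeasureTheory Real Set

/-! If `V ~ χ²₂` and `U ~ U(0,1)` are independent, then `(√V, πU)` has density
`r e^{-r²/2} / π` on `(0,∞) × (0,π)`. Polar coordinates (Jacobian `r`) turn it into the density
`e^{-(x²+y²)/2} / π` on the upper half-plane, the product of the standard normal density in `x` and
the half-normal density in `y`; the first coordinate `√V cos (πU)` is therefore standard normal. -/

open scoped ENNReal

namespace MeasureTheory

variable {E : Type*} [NormedAddCommGroup E] [NormedSpace ℝ E] [FiniteDimensional ℝ E]
  [MeasurableSpace E] [BorelSpace E] (μ : Measure E) [μ.IsAddHaarMeasure]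

theorem map_withDensity_abs_det_fderiv_mul {s : Set E} {f : E → E} {f' : E → E →L[ℝ] E}
    (hs : MeasurableSet s) (hf' : ∀ x ∈ s, HasFDerivWithinAt f (f' x) s x) (hf : InjOn f s)
    (hfm : Measurable f) (g : E → ℝ≥0∞) :
    ((μ.restrict s).withDensity fun x => ENNReal.ofReal |(f' x).det| * g (f x)).map f =
      (μ.restrict (f '' s)).withDensity g := by
  ext t ht
  have hft : MeasurableSet (f ⁻¹' t ∩ s) := (hfm ht).inter hs
  rw [Measure.map_apply hfm ht, withDensity_apply _ (hfm ht), withDensity_apply _ ht,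
    Measure.restrict_restrict (hfm ht), Measure.restrict_restrict ht, ← image_preimage_inter,
    lintegral_image_eq_lintegral_abs_det_fderiv_mul μ hft
      (fun x hx => (hf' x hx.2).mono inter_subset_right) (hf.mono inter_subset_right)]

theorem map_withDensity_abs_deriv_mul {s : Set ℝ} {f f' : ℝ → ℝ} (hs : MeasurableSet s)
    (hf' : ∀ x ∈ s, HasDerivWithinAt f (f' x) s x) (hf : InjOn f s) (hfm : Measurable f)
    (g : ℝ → ℝ≥0∞) :
    ((volume.restrict s).withDensity fun x => ENNReal.ofReal |f' x| * g (f x)).map f =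
      (volume.restrict (f '' s)).withDensity g := by
  simpa only [ContinuousLinearMap.det_toSpanSingleton] using
    map_withDensity_abs_det_fderiv_mul volume hs (fun x hx => (hf' x hx).hasFDerivWithinAt) hf
      hfm g

end MeasureTheory

lemma betaMeasure_half : betaMeasure (1 / 2) = volume.restrict (Ioo 0 1) := by
  have h : (fun u => ENNReal.ofReal (betaDensity (1 / 2) u)) = (Ioo (0 : ℝ) 1).indicator 1 := by
    ext u
    by_cases hu : 0 < u ∧ u < 1 <;> norm_num [betaDensity, realBeta, hu]
  rw [betaMeasure, h, withDensity_indicator_one measurableSet_Ioo]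

instance inst_s5 (k : ℝ) : SFinite (chiSqMeasure k) := by
  unfold chiSqMeasure
  infer_instance

lemma chiSqMeasure_two : chiSqMeasure 2 =
    (volume.restrict (Ioi 0)).withDensity fun v => ENNReal.ofReal (exp (-v / 2) / 2) := by
  rw [chiSqMeasure, ← withDensity_indicator measurableSet_Ioi]
  congr 1 with v
  by_cases hv : 0 < v <;> simp [chiSqDensity, hv]

noncomputable def rayleighMeasure : Measure ℝ :=
  (volume.restrict (Ioi 0)).withDensity fun r => ENNReal.ofReal (r * exp (-r ^ 2 / 2))

lemma map_sq_rayleighMeasure : rayleighMeasure.map (· ^ 2) = chiSqMeasure 2 := by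
  have hsq : (· ^ 2 : ℝ → ℝ) '' Ioi 0 = Ioi 0 := by
    ext v
    refine ⟨?_, fun (hv : 0 < v) => ⟨√v, sqrt_pos.2 hv, sq_sqrt hv.le⟩⟩
    rintro ⟨r, hr : 0 < r, rfl⟩
    exact pow_pos hr 2
  have hdens : rayleighMeasure = (volume.restrict (Ioi 0)).withDensity fun r =>
      ENNReal.ofReal |2 * r| * ENNReal.ofReal (exp (-(r ^ 2) / 2) / 2) := by
    refine withDensity_congr_ae ((ae_restrict_iff' measurableSet_Ioi).2 (ae_of_all _ ?_))
    intro r (hr : 0 < r)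
    dsimp only
    rw [← ENNReal.ofReal_mul (abs_nonneg _), abs_of_pos (by positivity)]
    ring_nf
  rw [hdens, map_withDensity_abs_deriv_mul (g := fun v => ENNReal.ofReal (exp (-v / 2) / 2))
    measurableSet_Ioi (fun r _ => (hasDerivAt_pow 2 r).hasDerivWithinAt.congr_deriv (by ring))
    (fun a ha b hb hab => (sq_eq_sq₀ (le_of_lt ha) (le_of_lt hb)).1 hab)
    (continuous_pow 2).measurable, hsq, chiSqMeasure_two]

lemma map_sqrt_chiSqMeasure_two : (chiSqMeasure 2).map sqrt = rayleighMeasure := by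
  have h : ∀ᵐ r ∂rayleighMeasure, sqrt (r ^ 2) = r :=
    (withDensity_absolutelyContinuous _ _).ae_le
      ((ae_restrict_iff' measurableSet_Ioi).2 (ae_of_all _ fun r hr => sqrt_sq (le_of_lt hr)))
  rw [← map_sq_rayleighMeasure, Measure.map_map continuous_sqrt.measurable
    (continuous_pow 2).measurable]
  exact (Measure.map_congr h).trans Measure.map_id'

lemma map_const_mul_restrict_Ioo {a : ℝ} (ha : 0 < a) :
    (volume.restrict (Ioo 0 1)).map (a * ·) =
      (volume.restrict (Ioo 0 a)).withDensity fun _ => ENNReal.ofReal a⁻¹ := by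
  have h := map_withDensity_abs_deriv_mul (s := Ioo 0 1) (f := (a * ·)) (f' := fun _ => a)
    (g := fun _ => ENNReal.ofReal a⁻¹) measurableSet_Ioo
    (fun x _ => (hasDerivAt_id x).const_mul a |>.hasDerivWithinAt.congr_deriv (mul_one a))
    (mul_right_injective₀ ha.ne').injOn (measurable_const_mul a)
  rwa [image_mul_left_Ioo ha, mul_zero, mul_one, ← ENNReal.ofReal_mul (abs_nonneg a),
    abs_of_pos ha, mul_inv_cancel₀ ha.ne', ENNReal.ofReal_one, withDensity_const, one_smul] at h

lemma polarCoord_symm_image_Ioi_prod_Ioo :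
    polarCoord.symm '' (Ioi 0 ×ˢ Ioo 0 π) = {q : ℝ × ℝ | 0 < q.2} := by
  ext q
  constructor
  · rintro ⟨p, ⟨hr, hθ⟩, rfl⟩
    exact mul_pos hr (sin_pos_of_pos_of_lt_pi hθ.1 hθ.2)
  · intro (hq : 0 < q.2)
    have hsrc : q ∈ polarCoord.source := Or.inr hq.ne'
    obtain ⟨hr, hθ⟩ := polarCoord.map_source hsrc
    have hinv := polarCoord.left_inv hsrc
    refine ⟨polarCoord q, ⟨hr, ?_, hθ.2⟩, hinv⟩
    by_contra! hθ0
    have : q.2 ≤ 0 := by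
      rw [← hinv]
      exact mul_nonpos_of_nonneg_of_nonpos (le_of_lt hr)
        (sin_nonpos_of_nonpos_of_neg_pi_le hθ0 hθ.1.le)
    linarith

lemma map_polarCoord_symm_withDensity (g : ℝ × ℝ → ℝ≥0∞) :
    ((volume.restrict (Ioi 0 ×ˢ Ioo 0 π)).withDensity fun p =>
        ENNReal.ofReal p.1 * g (polarCoord.symm p)).map polarCoord.symm =
      (volume.restrict {q : ℝ × ℝ | 0 < q.2}).withDensity g := by
  have hs : MeasurableSet (Ioi (0 : ℝ) ×ˢ Ioo 0 π) := measurableSet_Ioi.prod measurableSet_Ioo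
  have h := map_withDensity_abs_det_fderiv_mul volume hs
    (fun p _ => (hasFDerivAt_polarCoord_symm p).hasFDerivWithinAt)
    (polarCoord.symm.injOn.mono (prod_mono le_rfl (Ioo_subset_Ioo_left (by linarith [pi_pos]))))
    continuous_polarCoord_symm.measurable g
  rw [polarCoord_symm_image_Ioi_prod_Ioo] at h
  rw [← h]
  congr 1
  refine withDensity_congr_ae ((ae_restrict_iff' hs).2 (ae_of_all _ fun p hp => ?_))
  dsimp only
  rw [det_fderivPolarCoordSymm, abs_of_pos hp.1]

noncomputable def stdGaussianDensity (x : ℝ) : ℝ := exp (-(x ^ 2) / 2) / sqrt (2 * π)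

lemma stdGaussianDensity_nonneg (x : ℝ) : 0 ≤ stdGaussianDensity x := by
  unfold stdGaussianDensity
  positivity

lemma stdGaussianDensity_mul_two_mul (x y : ℝ) :
    stdGaussianDensity x * (2 * stdGaussianDensity y) = exp (-(x ^ 2 + y ^ 2) / 2) / π := by
  have : sqrt (2 * π) ≠ 0 := by positivity
  rw [stdGaussianDensity, stdGaussianDensity,
    show -(x ^ 2 + y ^ 2) / 2 = -(x ^ 2) / 2 + -(y ^ 2) / 2 by ring, exp_add]
  field_simp
  exact (sq_sqrt (by positivity)).symm

lemma lintegral_two_mul_stdGaussianDensity_Ioi :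
    ∫⁻ y in Ioi 0, ENNReal.ofReal (2 * stdGaussianDensity y) = 1 := by
  have hφ : (fun y => 2 * stdGaussianDensity y) =
      fun y => 2 / sqrt (2 * π) * exp (-(1 / 2) * y ^ 2) := by
    ext y
    rw [stdGaussianDensity]
    ring_nf
  have hint : Integrable (fun y => 2 / sqrt (2 * π) * exp (-(1 / 2) * y ^ 2)) :=
    (integrable_exp_neg_mul_sq (by norm_num)).const_mul _
  rw [← ofReal_integral_eq_lintegral_ofReal (hφ ▸ hint.integrableOn)
      (ae_of_all _ fun y => mul_nonneg zero_le_two (stdGaussianDensity_nonneg y)), hφ,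
    integral_const_mul, integral_gaussian_Ioi, div_div_eq_mul_div, div_one, mul_comm π 2]
  have : sqrt (2 * π) ≠ 0 := by positivity
  field_simp
  exact ENNReal.ofReal_one

lemma map_fst_withDensity_upperHalfPlane :
    ((volume.restrict {q : ℝ × ℝ | 0 < q.2}).withDensity fun q =>
        ENNReal.ofReal (stdGaussianDensity q.1) * ENNReal.ofReal (2 * stdGaussianDensity q.2)).map
        Prod.fst =
      volume.withDensity fun x => ENNReal.ofReal (stdGaussianDensity x) := by
  have hset : {q : ℝ × ℝ | 0 < q.2} = univ ×ˢ Ioi 0 := by ext; simp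
  have hφ : Measurable stdGaussianDensity := by unfold stdGaussianDensity; fun_prop
  rw [hset, Measure.volume_eq_prod, ← Measure.prod_restrict, Measure.restrict_univ,
    ← prod_withDensity hφ.ennreal_ofReal (hφ.const_mul 2).ennreal_ofReal, Measure.map_fst_prod,
    withDensity_apply _ MeasurableSet.univ, Measure.restrict_univ,
    lintegral_two_mul_stdGaussianDensity_Ioi, one_smul]

lemma rayleighMeasure_prod_withDensity :
    rayleighMeasure.prod ((volume.restrict (Ioo 0 π)).withDensity fun _ => ENNReal.ofReal π⁻¹) =
      (volume.restrict (Ioi 0 ×ˢ Ioo 0 π)).withDensity fun p => ENNReal.ofReal p.1 *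
        (ENNReal.ofReal (stdGaussianDensity (polarCoord.symm p).1) *
          ENNReal.ofReal (2 * stdGaussianDensity (polarCoord.symm p).2)) := by
  have hs : MeasurableSet (Ioi (0 : ℝ) ×ˢ Ioo 0 π) := measurableSet_Ioi.prod measurableSet_Ioo
  rw [rayleighMeasure, prod_withDensity (by fun_prop) measurable_const, Measure.prod_restrict,
    ← Measure.volume_eq_prod]
  refine withDensity_congr_ae ((ae_restrict_iff' hs).2 (ae_of_all _ fun p hp => ?_))
  have hr : 0 ≤ p.1 := le_of_lt hp.1
  dsimp only
  rw [← ENNReal.ofReal_mul (by positivity), ← ENNReal.ofReal_mul (stdGaussianDensity_nonneg _),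
    ← ENNReal.ofReal_mul hr, stdGaussianDensity_mul_two_mul, polarCoord_symm_apply]
  congr 1
  rw [mul_pow, mul_pow, ← mul_add, cos_sq_add_sin_sq, mul_one]
  ring

theorem stmt5 :
    PGN (1/2) 2 =
      volume.withDensity (fun x : ℝ =>
        ENNReal.ofReal (Real.exp (-(x ^ 2) / 2) / Real.sqrt (2 * π))) := by
  have hpolar : Measurable polarCoord.symm := continuous_polarCoord_symm.measurable
  have hpush : (fun p : ℝ × ℝ => sqrt p.1 * cos (π * p.2)) =
      (Prod.fst ∘ polarCoord.symm) ∘ Prod.map sqrt (π * ·) := rfl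
  rw [PGN, betaMeasure_half, hpush, ← Measure.map_map (measurable_fst.comp hpolar)
      (continuous_sqrt.measurable.prodMap (measurable_const_mul π)),
    ← Measure.map_prod_map _ _ continuous_sqrt.measurable (measurable_const_mul π),
    map_sqrt_chiSqMeasure_two, map_const_mul_restrict_Ioo pi_pos, rayleighMeasure_prod_withDensity,
    ← Measure.map_map measurable_fst hpolar, map_polarCoord_symm_withDensity (fun q =>
      ENNReal.ofReal (stdGaussianDensity q.1) * ENNReal.ofReal (2 * stdGaussianDensity q.2)),
    map_fst_withDensity_upperHalfPlane]
  rfl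
end

section
/- The PGN(1/2, 4) distribution has Lebesgue density f_X(x) = (x² + 1) e^{−x²/2} / (2√(2π)) for all x ∈ ℝ; equivalently, PGN(1/2, 4) is the equal mixture (1/2)·ν₁ + (1/2)·ν₂, where ν₁ is the measure with density x ↦ x² e^{−x²/2}/√(2π) and ν₂ is the standard normal distribution with density x ↦ e^{−x²/2}/√(2π). -/
open MeasureTheory Real Set

/-!
Given `V = v > 0`, the variable `√v cos (π U)` with `U` uniform on `(0, 1)` has the arcsine
density `1 / (π √(v - x²))` on `(-√v, √v)`. Integrating out `v` against the `χ²(4)` density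
`v e^{-v/2} / 4` and substituting `v = x² + s²` turns the density of `x` into
`e^{-x²/2} / (2π) · ∫₀^∞ (x² + s²) e^{-s²/2} ds`, and both half-line Gaussian moments
`∫₀^∞ e^{-s²/2} ds` and `∫₀^∞ s² e^{-s²/2} ds` equal `√(2π) / 2`.
-/

open scoped ENNReal

lemma chiSqDensity_four (v : ℝ) :
    chiSqDensity 4 v = if 0 < v then v * exp (-v / 2) / 4 else 0 := by
  have h4 : (4 : ℝ) / 2 = (2 : ℕ) := by norm_num
  simp only [chiSqDensity, h4, rpow_natCast]
  norm_num

lemma image_mul_cos_pi_mul_Ioo {r : ℝ} (hr : 0 < r) :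
    (fun u => r * cos (π * u)) '' Ioo 0 1 = Ioo (-r) r := by
  have hcos : cos '' Ioo 0 π = Ioo (-1) 1 := cosPartialHomeomorph.image_source_eq_target
  rw [show (fun u => r * cos (π * u)) = (r * ·) ∘ cos ∘ (π * ·) from rfl, image_comp, image_comp,
    image_mul_left_Ioo pi_pos, mul_zero, mul_one, hcos, image_mul_left_Ioo hr]
  simp

lemma injOn_mul_cos_pi_mul_Ioo {r : ℝ} (hr : 0 < r) :
    InjOn (fun u => r * cos (π * u)) (Ioo 0 1) := by
  have hπ : MapsTo (π * ·) (Ioo 0 1) (Ioo 0 π) := fun u hu =>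
    ⟨by nlinarith [hu.1, pi_pos], by nlinarith [hu.2, pi_pos]⟩
  intro a ha b hb h
  exact mul_left_cancel₀ pi_ne_zero <|
    cosPartialHomeomorph.injOn (hπ ha) (hπ hb) (mul_left_cancel₀ hr.ne' h)

lemma lintegral_Ioo_comp_mul_cos_pi_mul {r : ℝ} (hr : 0 < r) (f : ℝ → ℝ≥0∞) :
    ∫⁻ u in Ioo 0 1, f (r * cos (π * u)) =
      ∫⁻ x in Ioo (-r) r, ENNReal.ofReal (π * √(r ^ 2 - x ^ 2))⁻¹ * f x := by
  have hderiv : ∀ u ∈ Ioo (0 : ℝ) 1, HasDerivWithinAt (fun u => r * cos (π * u))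
      (r * (-sin (π * u) * π)) (Ioo 0 1) u := fun u _ =>
    (((hasDerivAt_id u).const_mul π).cos.const_mul r).hasDerivWithinAt.congr_deriv
      (by simp only [id]; ring)
  rw [← image_mul_cos_pi_mul_Ioo hr,
    lintegral_image_eq_lintegral_abs_deriv_mul measurableSet_Ioo hderiv
      (injOn_mul_cos_pi_mul_Ioo hr)]
  refine setLIntegral_congr_fun measurableSet_Ioo fun u ⟨hu0, hu1⟩ => ?_
  have hsin : 0 < sin (π * u) := sin_pos_of_pos_of_lt_pi (by positivity) (by nlinarith [pi_pos])
  -- `r sin (π u)` is both `√(r² - (r cos (π u))²)` and, up to the factor `π`, the Jacobian.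
  have hsqrt : √(r ^ 2 - (r * cos (π * u)) ^ 2) = r * sin (π * u) := by
    rw [← sqrt_sq (by positivity : 0 ≤ r * sin (π * u))]
    congr 1
    nlinarith [sin_sq_add_cos_sq (π * u)]
  have habs : |r * (-sin (π * u) * π)| = π * (r * sin (π * u)) := by
    rw [abs_of_nonpos (by nlinarith [pi_pos, mul_pos hr hsin])]
    ring
  rw [hsqrt, habs, ← mul_assoc, ← ENNReal.ofReal_mul (by positivity),
    mul_inv_cancel₀ (by positivity), ENNReal.ofReal_one, one_mul]

lemma lintegral_Ioi_eq_lintegral_Ioi_add_sq (a : ℝ) (g : ℝ → ℝ≥0∞) :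
    ∫⁻ v in Ioi a, g v = ∫⁻ s in Ioi 0, ENNReal.ofReal (2 * s) * g (a + s ^ 2) := by
  have himage : (fun s => a + s ^ 2) '' Ioi 0 = Ioi a := by
    ext v
    refine ⟨fun ⟨s, hs, hv⟩ => hv ▸ lt_add_of_pos_right a (pow_pos hs 2), fun hv => ?_⟩
    refine ⟨√(v - a), sqrt_pos.2 (sub_pos.2 hv), ?_⟩
    simp only [sq_sqrt (sub_pos.2 hv).le, add_sub_cancel]
  have hinj : InjOn (fun s : ℝ => a + s ^ 2) (Ioi 0) := fun s hs t ht h =>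
    (pow_left_strictMonoOn₀ two_ne_zero).injOn (le_of_lt hs) (le_of_lt ht) (add_left_cancel h)
  have hderiv : ∀ s ∈ Ioi (0 : ℝ), HasDerivWithinAt (fun s => a + s ^ 2) (2 * s) (Ioi 0) s :=
    fun s _ => ((hasDerivAt_pow 2 s).const_add a).hasDerivWithinAt.congr_deriv (by ring)
  rw [← himage, lintegral_image_eq_lintegral_abs_deriv_mul measurableSet_Ioi hderiv hinj]
  refine setLIntegral_congr_fun measurableSet_Ioi fun s hs => ?_
  rw [abs_of_pos (by simpa using hs)]

lemma integral_Ioi_exp_neg_sq_div_two : ∫ s in Ioi (0 : ℝ), exp (-s ^ 2 / 2) = √(2 * π) / 2 := by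
  simpa [neg_div, div_eq_inv_mul, mul_comm] using integral_gaussian_Ioi (1 / 2)

lemma integral_Ioi_sq_mul_exp_neg_sq_div_two :
    ∫ s in Ioi (0 : ℝ), s ^ 2 * exp (-s ^ 2 / 2) = √(2 * π) / 2 := by
  have h := integral_rpow_mul_exp_neg_mul_rpow two_pos (by norm_num : (-1 : ℝ) < 2)
    (by norm_num : (0 : ℝ) < 1 / 2)
  have hΓ : Gamma ((2 + 1) / 2) = √π / 2 := by
    rw [show (2 + 1 : ℝ) / 2 = 1 / 2 + 1 by norm_num, Gamma_add_one (by norm_num),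
      Gamma_one_half_eq]
    ring
  have h2 : (1 / 2 : ℝ) ^ (-(2 + 1) / 2 : ℝ) = 2 * √2 := by
    rw [one_div, inv_rpow zero_le_two, ← rpow_neg zero_le_two, neg_div, neg_neg,
      show (2 + 1) / 2 = (1 : ℝ) + 1 / 2 by norm_num, rpow_add two_pos, rpow_one, ← sqrt_eq_rpow]
  simp only [rpow_two, hΓ, h2] at h
  rw [sqrt_mul zero_le_two, show √2 * √π / 2 = 2 * √2 * (1 / 2) * (√π / 2) by ring, ← h]
  refine setIntegral_congr_fun measurableSet_Ioi fun s _ => ?_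
  ring_nf

/-- The joint density of `(V, √V cos (π U))` for `V ~ χ²(4)` and `U ~ Uniform(0, 1)`. -/
noncomputable def pgnJointDensity (v x : ℝ) : ℝ≥0∞ :=
  if x ^ 2 < v then ENNReal.ofReal (v * exp (-v / 2) / (4 * π * √(v - x ^ 2))) else 0

lemma measurable_pgnJointDensity : Measurable (Function.uncurry pgnJointDensity) :=
  Measurable.ite (measurableSet_lt (by fun_prop) measurable_fst) (by fun_prop) measurable_const

lemma lintegral_pgnJointDensity (x : ℝ) :
    ∫⁻ v, pgnJointDensity v x =
      ENNReal.ofReal ((x ^ 2 + 1) * exp (-(x ^ 2) / 2) / (2 * √(2 * π))) := by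
  have hind : (fun v => pgnJointDensity v x) = (Ioi (x ^ 2)).indicator
      fun v => ENNReal.ofReal (v * exp (-v / 2) / (4 * π * √(v - x ^ 2))) := by
    ext v
    simp [pgnJointDensity, indicator_apply]
  have hsubst : ∀ s ∈ Ioi (0 : ℝ), ENNReal.ofReal (2 * s) *
      ENNReal.ofReal ((x ^ 2 + s ^ 2) * exp (-(x ^ 2 + s ^ 2) / 2) /
        (4 * π * √(x ^ 2 + s ^ 2 - x ^ 2))) =
      ENNReal.ofReal (exp (-x ^ 2 / 2) / (2 * π) *
        (x ^ 2 * exp (-s ^ 2 / 2) + s ^ 2 * exp (-s ^ 2 / 2))) := by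
    intro s hs
    have hs : 0 < s := hs
    rw [← ENNReal.ofReal_mul (by positivity), add_sub_cancel_left, sqrt_sq hs.le,
      show -(x ^ 2 + s ^ 2) / 2 = -x ^ 2 / 2 + -s ^ 2 / 2 by ring, exp_add]
    congr 1
    field_simp
    ring
  have hint0 : IntegrableOn (fun s : ℝ => exp (-s ^ 2 / 2)) (Ioi 0) := by
    simpa [neg_div, div_eq_inv_mul, mul_comm] using
      (integrable_exp_neg_mul_sq (by norm_num : (0 : ℝ) < 1 / 2)).integrableOn
  have hint2 : IntegrableOn (fun s : ℝ => s ^ 2 * exp (-s ^ 2 / 2)) (Ioi 0) := by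
    simpa [neg_div, div_eq_inv_mul, mul_comm, rpow_two] using
      integrableOn_rpow_mul_exp_neg_mul_sq (by norm_num : (0 : ℝ) < 1 / 2)
        (by norm_num : (-1 : ℝ) < 2)
  have hint : IntegrableOn (fun s : ℝ => exp (-x ^ 2 / 2) / (2 * π) *
      (x ^ 2 * exp (-s ^ 2 / 2) + s ^ 2 * exp (-s ^ 2 / 2))) (Ioi 0) :=
    ((hint0.const_mul _).add hint2).const_mul _
  rw [hind, lintegral_indicator measurableSet_Ioi, lintegral_Ioi_eq_lintegral_Ioi_add_sq,
    setLIntegral_congr_fun measurableSet_Ioi hsubst,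
    ← ofReal_integral_eq_lintegral_ofReal hint (ae_of_all _ fun s => by positivity),
    integral_const_mul, integral_add (hint0.const_mul _) hint2, integral_const_mul,
    integral_Ioi_exp_neg_sq_div_two, integral_Ioi_sq_mul_exp_neg_sq_div_two]
  congr 1
  field_simp
  exact sq_sqrt (by positivity)

lemma ofReal_chiSqDensity_four_mul_lintegral_Ioo {f : ℝ → ℝ≥0∞} (hf : Measurable f) (v : ℝ) :
    ENNReal.ofReal (chiSqDensity 4 v) * ∫⁻ u in Ioo 0 1, f (√v * cos (π * u)) =
      ∫⁻ x, pgnJointDensity v x * f x := by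
  rw [chiSqDensity_four]
  split_ifs with hv
  · rw [lintegral_Ioo_comp_mul_cos_pi_mul (sqrt_pos.2 hv), sq_sqrt hv.le,
      ← lintegral_const_mul _ (by fun_prop)]
    have hIoo : Ioo (-√v) √v = {x | x ^ 2 < v} := by
      ext x
      exact sq_lt.symm
    rw [hIoo, ← lintegral_indicator (measurableSet_lt (by fun_prop) measurable_const)]
    refine lintegral_congr fun x => ?_
    by_cases hx : x ^ 2 < v
    · rw [indicator_of_mem (show x ∈ {x : ℝ | x ^ 2 < v} from hx), pgnJointDensity, if_pos hx,
        ← mul_assoc, ← ENNReal.ofReal_mul (by positivity)]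
      congr 2
      field_simp
    · simp [pgnJointDensity, hx]
  · have hx : ∀ x : ℝ, ¬ x ^ 2 < v := fun x hx => hv ((sq_nonneg x).trans_lt hx)
    simp [pgnJointDensity, hx]

lemma lintegral_PGN_half_four {f : ℝ → ℝ≥0∞} (hf : Measurable f) :
    ∫⁻ x, f x ∂PGN (1 / 2) 4 = ∫⁻ x, (∫⁻ v, pgnJointDensity v x) * f x := by
  have hφ : Measurable fun p : ℝ × ℝ => √p.1 * cos (π * p.2) := by fun_prop
  have hχ : Measurable fun v => ENNReal.ofReal (chiSqDensity 4 v) := by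
    simp only [chiSqDensity_four]
    exact ENNReal.measurable_ofReal.comp (Measurable.ite measurableSet_Ioi (by fun_prop)
      measurable_const)
  rw [PGN, lintegral_map hf hφ, betaMeasure_half, chiSqMeasure,
    lintegral_prod (fun p => f (√p.1 * cos (π * p.2))) (hf.comp hφ).aemeasurable,
    lintegral_withDensity_eq_lintegral_mul _ hχ
      (Measurable.lintegral_prod_right (f := fun v u => f (√v * cos (π * u))) (hf.comp hφ))]
  simp_rw [Pi.mul_apply, ofReal_chiSqDensity_four_mul_lintegral_Ioo hf]
  rw [lintegral_lintegral_swap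
    ((measurable_pgnJointDensity.mul (hf.comp measurable_snd)).aemeasurable)]
  exact lintegral_congr fun x =>
    lintegral_mul_const _ (measurable_pgnJointDensity.comp (measurable_id.prodMk measurable_const))

lemma PGN_half_four_eq_withDensity : PGN (1 / 2) 4 = volume.withDensity fun x =>
    ENNReal.ofReal ((x ^ 2 + 1) * exp (-(x ^ 2) / 2) / (2 * √(2 * π))) := by
  refine Measure.ext_of_lintegral _ fun f hf => ?_
  rw [lintegral_PGN_half_four hf, lintegral_withDensity_eq_lintegral_mul _ (by fun_prop) hf]
  simp_rw [lintegral_pgnJointDensity, Pi.mul_apply]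

theorem stmt6 :
    PGN (1/2) 4 =
      volume.withDensity (fun x : ℝ =>
        ENNReal.ofReal ((x ^ 2 + 1) * Real.exp (-(x ^ 2) / 2) / (2 * Real.sqrt (2 * π)))) ∧
    PGN (1/2) 4 =
      (1/2 : ENNReal) • volume.withDensity (fun x : ℝ =>
          ENNReal.ofReal (x ^ 2 * Real.exp (-(x ^ 2) / 2) / Real.sqrt (2 * π))) +
      (1/2 : ENNReal) • volume.withDensity (fun x : ℝ =>
          ENNReal.ofReal (Real.exp (-(x ^ 2) / 2) / Real.sqrt (2 * π))) := by
  refine ⟨PGN_half_four_eq_withDensity, ?_⟩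
  rw [PGN_half_four_eq_withDensity, ← withDensity_smul _ (by fun_prop),
    ← withDensity_smul _ (by fun_prop), ← withDensity_add_right _ (by fun_prop)]
  congr 1
  funext x
  rw [Pi.add_apply, Pi.smul_apply, Pi.smul_apply, smul_eq_mul, smul_eq_mul,
    ← ENNReal.ofReal_ofNat 2, ← ENNReal.ofReal_one, ← ENNReal.ofReal_div_of_pos two_pos,
    ← ENNReal.ofReal_mul (by norm_num), ← ENNReal.ofReal_mul (by norm_num),
    ← ENNReal.ofReal_add (by positivity) (by positivity)]
  congr 1
  ring
end
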